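/- Let E be a finite-dimensional real inner product space, let f, g : E → ℝ be twice continuously differentiable, and let α, γ ∈ ℝ. Suppose x : ℝ → E is twice differentiable and λ : ℝ → ℝ is differentiable, and for every t they satisfy the integral-derivative multiplier method equations ẋ(t) = -∇f(x(t)) - λ(t)·∇g(x(t)) and λ̇(t) = α·g(x(t)) + γ·(d²/dt²)[g(x(t))]. Then for every t, B(t)(ẍ(t)) + A(t)(ẋ(t)) + (α·g(x(t)) + γ·⟨ẋ(t), ∇²g(x(t))(ẋ(t))⟩)·∇g(x(t)) = 0, where A(t) = ∇²f(x(t)) + λ(t)·∇²g(x(t)) and B(t) = I + γ·∇g(x(t))∇g(x(t))ᵀ. -/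

import Mathlib

open RealInnerProductSpace

/-!
Differentiating the first equation along the trajectory gives
`ẍ = -∇²f(x) ẋ - λ ∇²g(x) ẋ - λ̇ ∇g(x)`, while the chain rule twice gives
`(d²/dt²) g(x) = ⟨∇g(x), ẍ⟩ + ⟨∇²g(x) ẋ, ẋ⟩`. Substituting the second equation for `λ̇`
and this expression for `(d²/dt²) g(x)` turns the first identity into the claimed one.
-/

section

variable {E : Type*} [NormedAddCommGroup E] [InnerProductSpace ℝ E] [CompleteSpace E]

theorem ContDiff.gradient {f : E → ℝ} {n : WithTop ℕ∞} (hf : ContDiff ℝ (n + 1) f) :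
    ContDiff ℝ n (gradient f) :=
  (InnerProductSpace.toDual ℝ E).symm.contDiff.comp (hf.fderiv_right le_rfl)

theorem HasGradientAt.comp_hasDerivAt {g : E → ℝ} {x : ℝ → E} {G v : E} {t : ℝ}
    (hg : HasGradientAt g G (x t)) (hx : HasDerivAt x v t) :
    HasDerivAt (fun s => g (x s)) ⟪G, v⟫ t := by
  simpa [InnerProductSpace.toDual_apply_apply, Function.comp_def] using
    hg.hasFDerivAt.comp_hasDerivAt t hx

theorem hasDerivAt_deriv_comp_of_hasDerivAt_deriv {g : E → ℝ} {x : ℝ → E} {a : E} {t : ℝ}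
    (hg : Differentiable ℝ g) (hg' : DifferentiableAt ℝ (gradient g) (x t))
    (hx : Differentiable ℝ x) (hx' : HasDerivAt (deriv x) a t) :
    HasDerivAt (deriv fun s => g (x s))
      (⟪gradient g (x t), a⟫ + ⟪fderiv ℝ (gradient g) (x t) (deriv x t), deriv x t⟫) t := by
  have hfirst : deriv (fun s => g (x s)) = fun s => ⟪gradient g (x s), deriv x s⟫ :=
    funext fun s => ((hg (x s)).hasGradientAt.comp_hasDerivAt (hx s).hasDerivAt).deriv
  rw [hfirst]
  exact (hg'.hasFDerivAt.comp_hasDerivAt t (hx t).hasDerivAt).inner ℝ hx'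

theorem hasDerivAt_deriv_of_deriv_eq_neg_gradient_sub_smul_gradient
    {f g : E → ℝ} {x : ℝ → E} {lam : ℝ → ℝ} {t : ℝ}
    (hf : DifferentiableAt ℝ (gradient f) (x t)) (hg : DifferentiableAt ℝ (gradient g) (x t))
    (hx : DifferentiableAt ℝ x t) (hlam : DifferentiableAt ℝ lam t)
    (hode : deriv x = fun s => -gradient f (x s) - lam s • gradient g (x s)) :
    HasDerivAt (deriv x)
      (-fderiv ℝ (gradient f) (x t) (deriv x t)
        - (lam t • fderiv ℝ (gradient g) (x t) (deriv x t) + deriv lam t • gradient g (x t))) t := by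
  refine HasDerivAt.congr_of_eventuallyEq ?_ (Filter.EventuallyEq.of_eq hode)
  exact (hf.hasFDerivAt.comp_hasDerivAt t hx.hasDerivAt).neg.sub
    (hlam.hasDerivAt.smul (hg.hasFDerivAt.comp_hasDerivAt t hx.hasDerivAt))

end

theorem integral_derivative_multiplier_dynamics_general
    {E : Type*} [NormedAddCommGroup E] [InnerProductSpace ℝ E] [FiniteDimensional ℝ E]
    (f g : E → ℝ) (hf : ContDiff ℝ 2 f) (hg : ContDiff ℝ 2 g)
    (α γ : ℝ) (x : ℝ → E) (lam : ℝ → ℝ)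
    (hx : Differentiable ℝ x)
    (hlam : Differentiable ℝ lam)
    (hode1 : ∀ t, deriv x t = -gradient f (x t) - lam t • gradient g (x t))
    (hode2 : ∀ t, deriv lam t
        = α * g (x t) + γ * deriv (deriv (fun s => g (x s))) t) :
    ∀ t, (deriv (deriv x) t
            + (γ * ⟪gradient g (x t), deriv (deriv x) t⟫) • gradient g (x t))
        + (fderiv ℝ (gradient f) (x t) (deriv x t)
            + lam t • fderiv ℝ (gradient g) (x t) (deriv x t))
        + (α * g (x t)
            + γ * ⟪deriv x t, fderiv ℝ (gradient g) (x t) (deriv x t)⟫)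
          • gradient g (x t) = 0 := by
  intro t
  have hgradf : Differentiable ℝ (gradient f) := hf.gradient.differentiable one_ne_zero
  have hgradg : Differentiable ℝ (gradient g) := hg.gradient.differentiable one_ne_zero
  have hxx := hasDerivAt_deriv_of_deriv_eq_neg_gradient_sub_smul_gradient
    (hgradf (x t)) (hgradg (x t)) (hx t) (hlam t) (funext hode1)
  have hgxx := hasDerivAt_deriv_comp_of_hasDerivAt_deriv
    (hg.differentiable two_ne_zero) (hgradg (x t)) hx hxx.differentiableAt.hasDerivAt
  have hxx_eq := hxx.deriv
  rw [hode2 t, hgxx.deriv] at hxx_eq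
  rw [real_inner_comm _ (deriv x t)]
  linear_combination (norm := module) hxx_eq

/-- Second-order dynamics of the integral-derivative multiplier method:
if `ẋ = -∇f(x) - λ·∇g(x)` and `λ̇ = α·g(x) + γ·(d²/dt²)[g(x)]`, then
`B(ẍ) + A(ẋ) + (α·g(x) + γ·⟨ẋ, ∇²g(x)(ẋ)⟩)·∇g(x) = 0`,
where `A = ∇²f(x) + λ·∇²g(x)` and `B = I + γ·∇g(x)∇g(x)ᵀ`. -/
theorem integral_derivative_multiplier_dynamics
    {E : Type*} [NormedAddCommGroup E] [InnerProductSpace ℝ E] [FiniteDimensional ℝ E]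
    (f g : E → ℝ) (hf : ContDiff ℝ 2 f) (hg : ContDiff ℝ 2 g)
    (α γ : ℝ) (x : ℝ → E) (lam : ℝ → ℝ)
    (hx : Differentiable ℝ x) (hx' : Differentiable ℝ (deriv x))
    (hlam : Differentiable ℝ lam)
    (hode1 : ∀ t, deriv x t = -gradient f (x t) - lam t • gradient g (x t))
    (hode2 : ∀ t, deriv lam t
        = α * g (x t) + γ * deriv (deriv (fun s => g (x s))) t) :
    ∀ t, (deriv (deriv x) t
            + (γ * ⟪gradient g (x t), deriv (deriv x) t⟫) • gradient g (x t))
        + (fderiv ℝ (gradient f) (x t) (deriv x t)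
            + lam t • fderiv ℝ (gradient g) (x t) (deriv x t))
        + (α * g (x t)
            + γ * ⟪deriv x t, fderiv ℝ (gradient g) (x t) (deriv x t)⟫)
          • gradient g (x t) = 0 :=
  integral_derivative_multiplier_dynamics_general f g hf hg α γ x lam hx hlam hode1 hode2
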